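/- Let K be an algebraically closed field, complete with respect to a nontrivial non-Archimedean absolute value. Order 𝔸¹_Berk(K) by ξ ≤ ξ' iff ‖f‖_ξ ≤ ‖f‖_{ξ'} for all f ∈ K[X]. Then every pair of points ξ, ξ' ∈ 𝔸¹_Berk(K) has a (necessarily unique) least upper bound ξ ∨ ξ' with respect to this partial order. -/

import Mathlib

/-!
Over an algebraically closed field every polynomial is a constant times a product of linear
factors `X - C a`, so a multiplicative seminorm extending `|·|` is determined by the function
`a ↦ ‖X - C a‖`, and `ξ ≤ ξ'` holds as soon as it holds on linear polynomials. The join of `ξ`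
and `ξ'` is therefore the point with `‖X - C a‖ = max ‖X - C a‖_ξ ‖X - C a‖_ξ'`. If
`ξ' ≤ ξ` this is `ξ`. Otherwise pick `b` with `‖X - C b‖_ξ < ‖X - C b‖_ξ' = R`; the
ultrametric inequality (which holds for any seminorm bounded by `1` on integers) forces the
maximum to equal `max R |b - a|`, which is the value at `X - C a` of the Gauss norm of the disc
of radius `R` about `b`, a multiplicative seminorm by Gauss's lemma.
-/

open Polynomial

/-- A non-Archimedean absolute value on a field `K`. -/
def IsNonarchAbs {K : Type*} [Field K] (abv : K → ℝ) : Prop :=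
  (∀ x, 0 ≤ abv x) ∧ (∀ x, abv x = 0 ↔ x = 0) ∧
  (∀ x y, abv (x * y) = abv x * abv y) ∧
  (∀ x y, abv (x + y) ≤ max (abv x) (abv y))

/-- A multiplicative seminorm on `K[X]` extending the absolute value `abv`. -/
def IsMultSeminorm {K : Type*} [Field K] (abv : K → ℝ) (N : Polynomial K → ℝ) : Prop :=
  (∀ f, 0 ≤ N f) ∧ (∀ c : K, N (C c) = abv c) ∧
  (∀ f g, N (f + g) ≤ N f + N g) ∧ (∀ f g, N (f * g) = N f * N g)

/-- The Berkovich affine line over `(K, abv)`. -/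
abbrev BerkLine (K : Type*) [Field K] (abv : K → ℝ) :=
  {N : Polynomial K → ℝ // IsMultSeminorm abv N}

theorem MulRingSeminorm.isNonarchimedean_of_natCast_le_one {R : Type*} [CommRing R]
    (p : MulRingSeminorm R) (h : ∀ n : ℕ, p n ≤ 1) : IsNonarchimedean p := by
  intro x y
  set M := max (p x) (p y)
  have hpow (m : ℕ) : p (x + y) ^ m ≤ (m + 1) * M ^ m := by
    rw [← map_pow, add_pow]
    calc p (∑ k ∈ Finset.range (m + 1), x ^ k * y ^ (m - k) * (m.choose k : R))
        ≤ ∑ k ∈ Finset.range (m + 1), p (x ^ k * y ^ (m - k) * (m.choose k : R)) :=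
          Finset.le_sum_of_subadditive p (map_zero p).le (map_add_le_add p) _ _
      _ ≤ ∑ _k ∈ Finset.range (m + 1), M ^ m := Finset.sum_le_sum fun k hk => ?_
      _ = (m + 1) * M ^ m := by simp
    calc p (x ^ k * y ^ (m - k) * (m.choose k : R))
        = p x ^ k * p y ^ (m - k) * p (m.choose k : R) := by simp only [map_mul, map_pow]
      _ ≤ M ^ k * M ^ (m - k) * 1 := by
          gcongr
          exacts [le_max_left _ _, le_max_right _ _, h _]
      _ = M ^ m := by
          rw [mul_one, ← pow_add, Nat.add_sub_cancel' (Finset.mem_range_succ_iff.mp hk)]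
  refine le_of_forall_gt_imp_ge_of_dense fun a ha => ?_
  rcases (apply_nonneg p x |>.trans (le_max_left _ _)).eq_or_lt with hM | hM
  · calc p (x + y) ≤ p x + p y := map_add_le_add p x y
      _ ≤ M + M := add_le_add (le_max_left _ _) (le_max_right _ _)
      _ ≤ a := by linarith
  · obtain ⟨m, hm⟩ := Real.exists_natCast_add_one_lt_pow_of_one_lt ((one_lt_div hM).2 ha)
    rw [div_pow, lt_div_iff₀ (by positivity)] at hm
    refine le_of_pow_le_pow_left₀ (fun hm0 => ?_) (hM.trans ha).le ((hpow m).trans hm.le)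
    simp [hm0] at hm

namespace IsNonarchAbs

variable {K : Type*} [Field K] {abv : K → ℝ}

def toAbsoluteValue (habv : IsNonarchAbs abv) : AbsoluteValue K ℝ where
  toFun := abv
  map_mul' := habv.2.2.1
  nonneg' := habv.1
  eq_zero' := habv.2.1
  add_le' x y := (habv.2.2.2 x y).trans (max_le_add_of_nonneg (habv.1 x) (habv.1 y))

theorem isNonarchimedean (habv : IsNonarchAbs abv) : IsNonarchimedean habv.toAbsoluteValue :=
  habv.2.2.2

end IsNonarchAbs

namespace IsMultSeminorm

variable {K : Type*} [Field K] {v : AbsoluteValue K ℝ} {N N₁ N₂ : K[X] → ℝ}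

def toMulRingSeminorm (hN : IsMultSeminorm v N) : MulRingSeminorm K[X] where
  toFun := N
  map_zero' := by simpa using hN.2.1 0
  add_le' := hN.2.2.1
  neg' f := by
    rw [neg_eq_neg_one_mul, ← C_1, ← C_neg, hN.2.2.2, hN.2.1, v.map_neg, v.map_one, one_mul]
  map_one' := by simpa using hN.2.1 1
  map_mul' := hN.2.2.2

@[simp]
theorem coe_toMulRingSeminorm (hN : IsMultSeminorm v N) : ⇑hN.toMulRingSeminorm = N := rfl

theorem isNonarchimedean (hv : IsNonarchimedean v) (hN : IsMultSeminorm v N) :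
    IsNonarchimedean N := by
  refine hN.toMulRingSeminorm.isNonarchimedean_of_natCast_le_one fun n => ?_
  rw [coe_toMulRingSeminorm, ← map_natCast C, hN.2.1]
  exact hv.apply_natCast_le_one

theorem X_sub_C_le_max (hv : IsNonarchimedean v) (hN : IsMultSeminorm v N) (b c : K) :
    N (X - C c) ≤ max (N (X - C b)) (v (b - c)) := by
  rw [← hN.2.1, show X - C c = X - C b + C (b - c) by rw [C_sub]; ring]
  exact hN.isNonarchimedean hv _ _

theorem le_max_X_sub_C (hv : IsNonarchimedean v) (hN : IsMultSeminorm v N) (b c : K) :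
    v (b - c) ≤ max (N (X - C b)) (N (X - C c)) := by
  have hneg : N (-(X - C b)) = N (X - C b) := map_neg_eq_map hN.toMulRingSeminorm _
  calc v (b - c) = N (X - C c + -(X - C b)) := by rw [← hN.2.1, C_sub]; ring_nf
    _ ≤ max (N (X - C c)) (N (-(X - C b))) := hN.isNonarchimedean hv _ _
    _ = max (N (X - C b)) (N (X - C c)) := by rw [hneg, max_comm]

theorem eq_leadingCoeff_mul_prod_roots [IsAlgClosed K] (hN : IsMultSeminorm v N) (f : K[X]) :
    N f = v f.leadingCoeff * (f.roots.map fun a => N (X - C a)).prod := by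
  conv_lhs => rw [(IsAlgClosed.splits f).eq_prod_roots]
  rw [hN.2.2.2, hN.2.1, ← coe_toMulRingSeminorm hN, map_multiset_prod, Multiset.map_map]
  rfl

theorem le_iff_forall_X_sub_C_le [IsAlgClosed K] (hN₁ : IsMultSeminorm v N₁)
    (hN₂ : IsMultSeminorm v N₂) : N₁ ≤ N₂ ↔ ∀ a, N₁ (X - C a) ≤ N₂ (X - C a) := by
  refine ⟨fun h a => h _, fun h f => ?_⟩
  rw [hN₁.eq_leadingCoeff_mul_prod_roots, hN₂.eq_leadingCoeff_mul_prod_roots]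
  gcongr
  exact Multiset.prod_map_le_prod_map₀ _ _ (fun a _ => hN₁.1 _) fun a _ => h a

theorem max_X_sub_C_eq_of_lt (hv : IsNonarchimedean v) (hN₁ : IsMultSeminorm v N₁)
    (hN₂ : IsMultSeminorm v N₂) {b : K} (hb : N₁ (X - C b) < N₂ (X - C b)) (c : K) :
    max (N₁ (X - C c)) (N₂ (X - C c)) = max (N₂ (X - C b)) (v (b - c)) := by
  have hR : N₂ (X - C b) ≤ max (N₁ (X - C c)) (N₂ (X - C c)) := by
    by_contra! h
    have h₁ := hN₂.X_sub_C_le_max hv c b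
    have h₂ := hN₁.le_max_X_sub_C hv b c
    rw [v.map_sub] at h₁
    grind
  refine le_antisymm (max_le ?_ (hN₂.X_sub_C_le_max hv b c)) (max_le hR ?_)
  · exact (hN₁.X_sub_C_le_max hv b c).trans (max_le_max_right _ hb.le)
  · exact (hN₂.le_max_X_sub_C hv b c).trans (max_le hR (le_max_right _ _))

end IsMultSeminorm

namespace Polynomial

variable {K : Type*} [Field K] {v : AbsoluteValue K ℝ}

theorem gaussNorm_X_add_C (hv : IsNonarchimedean v) {R : ℝ} (hR : 0 ≤ R) (a : K) :
    (X + C a).gaussNorm v R = max R (v a) := by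
  refine le_antisymm ?_ (max_le ?_ ?_)
  · calc (X + C a).gaussNorm v R ≤ max (X.gaussNorm v R) ((C a).gaussNorm v R) :=
          isNonarchimedean_gaussNorm v hv hR _ _
      _ = max R (v a) := by rw [← monomial_one_one_eq_X, gaussNorm_monomial, gaussNorm_C]; simp
  · have := le_gaussNorm v (X + C a) hR 1
    rwa [coeff_add, coeff_X_one, coeff_C_of_ne_zero one_ne_zero, add_zero, v.map_one, one_mul,
      pow_one] at this
  · have := le_gaussNorm v (X + C a) hR 0
    rwa [coeff_add, coeff_X_zero, coeff_C_zero, zero_add, pow_zero, mul_one] at this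

noncomputable def gaussNormAt (v : AbsoluteValue K ℝ) (b : K) (R : ℝ) (f : K[X]) : ℝ :=
  (f.comp (X + C b)).gaussNorm v R

theorem isMultSeminorm_gaussNormAt (hv : IsNonarchimedean v) (b : K) {R : ℝ} (hR : 0 < R) :
    IsMultSeminorm v (gaussNormAt v b R) := by
  refine ⟨fun f => gaussNorm_nonneg _ _ hR.le, fun c => by simp [gaussNormAt], fun f g => ?_,
    fun f g => by simp only [gaussNormAt, mul_comp]; exact gaussNorm_mul hv hR _ _⟩
  simp only [gaussNormAt, add_comp]
  exact (isNonarchimedean_gaussNorm v hv hR.le).add_le (fun _ => gaussNorm_nonneg _ _ hR.le)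

theorem gaussNormAt_X_sub_C (hv : IsNonarchimedean v) (b : K) {R : ℝ} (hR : 0 ≤ R) (c : K) :
    gaussNormAt v b R (X - C c) = max R (v (b - c)) := by
  rw [gaussNormAt, sub_comp, X_comp, C_comp, add_sub_assoc, ← C_sub, gaussNorm_X_add_C hv hR]

end Polynomial

theorem IsMultSeminorm.exists_X_sub_C_eq_max {K : Type*} [Field K] {v : AbsoluteValue K ℝ}
    {N₁ N₂ : K[X] → ℝ} (hv : IsNonarchimedean v) (hN₁ : IsMultSeminorm v N₁)
    (hN₂ : IsMultSeminorm v N₂) :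
    ∃ N, IsMultSeminorm v N ∧ ∀ c, N (X - C c) = max (N₁ (X - C c)) (N₂ (X - C c)) := by
  by_cases h : ∀ b, N₂ (X - C b) ≤ N₁ (X - C b)
  · exact ⟨N₁, hN₁, fun c => (max_eq_left (h c)).symm⟩
  obtain ⟨b, hb⟩ : ∃ b, N₁ (X - C b) < N₂ (X - C b) := by simpa using h
  have hR : 0 < N₂ (X - C b) := (hN₁.1 _).trans_lt hb
  refine ⟨gaussNormAt v b _, isMultSeminorm_gaussNormAt hv b hR, fun c => ?_⟩
  rw [gaussNormAt_X_sub_C hv b hR.le, hN₁.max_X_sub_C_eq_of_lt hv hN₂ hb]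

theorem stmt5_general {K : Type*} [Field K] [IsAlgClosed K] (abv : K → ℝ)
    (habv : IsNonarchAbs abv) :
    ∀ ξ ξ' : BerkLine K abv, ∃! ζ : BerkLine K abv,
      (∀ f, ξ.1 f ≤ ζ.1 f) ∧ (∀ f, ξ'.1 f ≤ ζ.1 f) ∧
      ∀ ζ' : BerkLine K abv,
        (∀ f, ξ.1 f ≤ ζ'.1 f) → (∀ f, ξ'.1 f ≤ ζ'.1 f) → ∀ f, ζ.1 f ≤ ζ'.1 f := by
  intro ξ ξ'
  set v := habv.toAbsoluteValue
  have hpt (ζ : BerkLine K abv) : IsMultSeminorm v ζ.1 := ζ.2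
  obtain ⟨N, hN, hN_max⟩ := (hpt ξ).exists_X_sub_C_eq_max habv.isNonarchimedean (hpt ξ')
  have le_iff (ζ : BerkLine K abv) : N ≤ ζ.1 ↔ ξ.1 ≤ ζ.1 ∧ ξ'.1 ≤ ζ.1 := by
    simp only [hN.le_iff_forall_X_sub_C_le (hpt ζ), (hpt ξ).le_iff_forall_X_sub_C_le (hpt ζ),
      (hpt ξ').le_iff_forall_X_sub_C_le (hpt ζ), hN_max, max_le_iff, forall_and]
  obtain ⟨hξ, hξ'⟩ := (le_iff ⟨N, hN⟩).1 le_rfl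
  refine ⟨⟨N, hN⟩, ⟨hξ, hξ', fun ζ h h' => (le_iff ζ).2 ⟨h, h'⟩⟩, ?_⟩
  rintro ζ ⟨h, h', hleast⟩
  exact Subtype.ext (le_antisymm (hleast ⟨N, hN⟩ hξ hξ') ((le_iff ζ).2 ⟨h, h'⟩))

/-- Every pair of points of the Berkovich affine line, ordered pointwise, has a unique
least upper bound. -/
theorem stmt5 {K : Type*} [Field K] [IsAlgClosed K] (abv : K → ℝ)
    (habv : IsNonarchAbs abv)
    (hnontriv : ∃ x : K, abv x ≠ 0 ∧ abv x ≠ 1)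
    (hcomplete : ∀ s : ℕ → K,
      (∀ ε : ℝ, 0 < ε → ∃ N, ∀ m ≥ N, ∀ n ≥ N, abv (s m - s n) < ε) →
      ∃ x : K, ∀ ε : ℝ, 0 < ε → ∃ N, ∀ n ≥ N, abv (s n - x) < ε) :
    ∀ ξ ξ' : BerkLine K abv, ∃! ζ : BerkLine K abv,
      (∀ f, ξ.1 f ≤ ζ.1 f) ∧ (∀ f, ξ'.1 f ≤ ζ.1 f) ∧
      ∀ ζ' : BerkLine K abv,
        (∀ f, ξ.1 f ≤ ζ'.1 f) → (∀ f, ξ'.1 f ≤ ζ'.1 f) → ∀ f, ζ.1 f ≤ ζ'.1 f :=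
  stmt5_general abv habv
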